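/- Let X be a Hausdorff space and suppose {u_α : α ∈ [0,1]} is a decreasing family of nonempty compact subsets of X such that the map α ↦ u_α is left continuous on (0,1], right continuous at 0 (in the Vietoris topology), and satisfies closure(⋃_{β>α} u_β) ⊆ u_α for each α ∈ [0,1). Then there exists a unique w ∈ ℱ(X) such that w_α = u_α for every α ∈ [0,1]. -/
import Mathlib


open Set Filter Topology
open scoped Uniformity

/-- The α-cut of a fuzzy set: `{x | α ≤ u x}` for `α ≠ 0`, and the support
(closure of `{x | 0 < u x}`) for `α = 0`. -/
noncomputable def fuzzyCut {X : Type*} [TopologicalSpace X] (u : X → ℝ) (α : ℝ) : Set X :=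
  if α = 0 then closure {x | 0 < u x} else {x | α ≤ u x}

/-- `u` belongs to `ℱ(X)`: a normal upper semicontinuous `[0,1]`-valued fuzzy set
with compact support. -/
structure IsFuzzySet {X : Type*} [TopologicalSpace X] (u : X → ℝ) : Prop where
  mem_Icc : ∀ x, u x ∈ Set.Icc (0:ℝ) 1
  usc : UpperSemicontinuous u
  normal : ∃ x, u x = 1
  compact_supp : IsCompact (closure {x | 0 < u x})

/-- The Zadeh extension of `f`: `x ↦ sup {u z : f z = x}` (and `0` when the
preimage is empty, since `sSup ∅ = 0` in `ℝ`). -/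
noncomputable def zadeh {X : Type*} (f : X → X) (u : X → ℝ) : X → ℝ :=
  fun x => sSup (u '' (f ⁻¹' {x}))

/-- `W(A) = ⋃ a ∈ A, W(a)` where `W(a) = {y | (a, y) ∈ W}`. -/
def ballImage {Y : Type*} (W : Set (Y × Y)) (A : Set Y) : Set Y :=
  {y | ∃ a ∈ A, (a, y) ∈ W}

/-- The Hausdorff entourage relation `𝒦[W]`: `(A,B) ∈ 𝒦[W]` iff `A ⊆ W(B)` and `B ⊆ W(A)`. -/
def KRel {Y : Type*} (W : Set (Y × Y)) (A B : Set Y) : Prop :=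
  A ⊆ ballImage W B ∧ B ⊆ ballImage W A

/-- The level-wise entourage relation `ℱ[W]`: `(u_α, v_α) ∈ 𝒦[W]` for all `α ∈ [0,1]`. -/
def FRel {X : Type*} [TopologicalSpace X] (W : Set (X × X)) (u v : X → ℝ) : Prop :=
  ∀ α ∈ Set.Icc (0:ℝ) 1, KRel W (fuzzyCut u α) (fuzzyCut v α)

/-- The Skorokhod entourage relation `G[W, ε]`: there is an increasing homeomorphism `t`
of `[0,1]` with `‖t‖ < ε` and `(u_α, v_{t α}) ∈ 𝒦[W]` for all `α ∈ [0,1]`. -/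
def SkoRel {X : Type*} [TopologicalSpace X] (W : Set (X × X)) (ε : ℝ) (u v : X → ℝ) : Prop :=
  ∃ t : ℝ → ℝ, StrictMonoOn t (Set.Icc 0 1) ∧ t 0 = 0 ∧ t 1 = 1 ∧
    Set.MapsTo t (Set.Icc 0 1) (Set.Icc 0 1) ∧ Set.SurjOn t (Set.Icc 0 1) (Set.Icc 0 1) ∧
    (∀ α ∈ Set.Icc (0:ℝ) 1, |t α - α| < ε) ∧
    (∀ α ∈ Set.Icc (0:ℝ) 1, KRel W (fuzzyCut u α) (fuzzyCut v (t α)))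

/-- The sendograph of `u`: `end(u) ∩ (u₀ × [0,1])`. -/
noncomputable def send {X : Type*} [TopologicalSpace X] (u : X → ℝ) : Set (X × ℝ) :=
  {p | p.1 ∈ fuzzyCut u 0 ∧ p.2 ∈ Set.Icc (0:ℝ) 1 ∧ p.2 ≤ u p.1}

/-- The product entourage `U × V_ε` on `X × [0,1]`. -/
def prodEnt {X : Type*} (U : Set (X × X)) (ε : ℝ) : Set ((X × ℝ) × (X × ℝ)) :=
  {p | (p.1.1, p.2.1) ∈ U ∧ |p.1.2 - p.2.2| < ε}

/-- The sendograph entourage relation `S[U, ε]`. -/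
noncomputable def SendRel {X : Type*} [TopologicalSpace X] (U : Set (X × X)) (ε : ℝ)
    (u v : X → ℝ) : Prop :=
  KRel (prodEnt U ε) (send u) (send v)

/-- `u_{α⁺} = closure (⋃ β ∈ (α, 1], u_β)`, the right limit of the level map. -/
noncomputable def cutPlus {X : Type*} [TopologicalSpace X] (u : X → ℝ) (α : ℝ) : Set X :=
  closure (⋃ β ∈ Set.Ioc α 1, fuzzyCut u β)

/-- `B` belongs to the Vietoris basic open set `⟨V 0, …, V (k-1)⟩`. -/
def inVietoris {Y : Type*} (B : Set Y) (k : ℕ) (V : Fin k → Set Y) : Prop :=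
  B ⊆ (⋃ i, V i) ∧ ∀ i, (B ∩ V i).Nonempty

/-- Representation theorem: a decreasing family `{u α}_{α ∈ [0,1]}` of nonempty compact
sets which is left continuous on `(0,1]` and right continuous at `0` (in the Vietoris
topology) and satisfies `closure (⋃_{β > α} u β) ⊆ u α` is the family of α-cuts of a
unique `w ∈ ℱ(X)`. -/
theorem stmt19 {X : Type*} [TopologicalSpace X] [T2Space X] (u : ℝ → Set X)
    (hcomp : ∀ α ∈ Set.Icc (0:ℝ) 1, IsCompact (u α))
    (hne : ∀ α ∈ Set.Icc (0:ℝ) 1, (u α).Nonempty)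
    (hmono : ∀ α ∈ Set.Icc (0:ℝ) 1, ∀ β ∈ Set.Icc (0:ℝ) 1, α ≤ β → u β ⊆ u α)
    (hleft : ∀ α ∈ Set.Ioc (0:ℝ) 1, ∀ (k : ℕ) (V : Fin k → Set X),
      (∀ i, IsOpen (V i)) → inVietoris (u α) k V →
      ∃ δ > (0:ℝ), ∀ lam ∈ Set.Icc (0:ℝ) 1, α - δ < lam → lam ≤ α → inVietoris (u lam) k V)
    (hright : ∀ (k : ℕ) (V : Fin k → Set X), (∀ i, IsOpen (V i)) → inVietoris (u 0) k V →
      ∃ δ > (0:ℝ), ∀ lam ∈ Set.Icc (0:ℝ) 1, lam < δ → inVietoris (u lam) k V)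
    (hclos : ∀ α ∈ Set.Ico (0:ℝ) 1, closure (⋃ β ∈ Set.Ioc α 1, u β) ⊆ u α) :
    ∃! w : X → ℝ, IsFuzzySet w ∧ ∀ α ∈ Set.Icc (0:ℝ) 1, fuzzyCut w α = u α := by
  classical
  set w : X → ℝ := fun x => sSup {α | α ∈ Set.Icc (0:ℝ) 1 ∧ x ∈ u α} with hwdef
  have hbdd : ∀ x : X, BddAbove {α | α ∈ Set.Icc (0:ℝ) 1 ∧ x ∈ u α} :=
    fun x => ⟨1, fun a ha => ha.1.2⟩
  -- lemma A
  have hA : ∀ (x : X) (α : ℝ), α ∈ Set.Icc (0:ℝ) 1 → x ∈ u α → α ≤ w x :=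
    fun x α hα hx => le_csSup (hbdd x) ⟨hα, hx⟩
  have hw_nonneg : ∀ x, 0 ≤ w x := by
    intro x
    by_cases h : ({α | α ∈ Set.Icc (0:ℝ) 1 ∧ x ∈ u α}).Nonempty
    · obtain ⟨a, ha⟩ := h
      exact le_trans ha.1.1 (le_csSup (hbdd x) ha)
    · rw [Set.not_nonempty_iff_eq_empty] at h
      simp only [hwdef, h, Real.sSup_empty, le_refl]
  have hw_le_one : ∀ x, w x ≤ 1 :=
    fun x => Real.sSup_le (fun a ha => ha.1.2) zero_le_one
  -- lemma B
  have hB : ∀ α ∈ Set.Ioc (0:ℝ) 1, ∀ x, α ≤ w x → x ∈ u α := by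
    intro α hα x hx
    have hSne : {β | β ∈ Set.Icc (0:ℝ) 1 ∧ x ∈ u β}.Nonempty := by
      by_contra h
      rw [Set.not_nonempty_iff_eq_empty] at h
      have : w x = 0 := by simp only [hwdef, h, Real.sSup_empty]
      rw [this] at hx
      exact absurd hx (not_le.2 hα.1)
    have hmem : ∀ γ ∈ Set.Ico (0:ℝ) α, x ∈ u γ := by
      intro γ hγ
      obtain ⟨β, hβ, hγβ⟩ := exists_lt_of_lt_csSup hSne (lt_of_lt_of_le hγ.2 hx)
      exact hmono γ ⟨hγ.1, le_trans (le_of_lt hγ.2) hα.2⟩ β hβ.1 (le_of_lt hγβ) hβ.2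
    by_contra hxu
    have hvie : inVietoris (u α) 1 (fun _ => ({x}ᶜ : Set X)) := by
      constructor
      · intro y hy
        exact Set.mem_iUnion.2 ⟨0, fun h => hxu (h ▸ hy)⟩
      · intro _
        obtain ⟨y, hy⟩ := hne α ⟨le_of_lt hα.1, hα.2⟩
        exact ⟨y, hy, fun h => hxu (h ▸ hy)⟩
    obtain ⟨δ, hδ, hδ'⟩ := hleft α hα 1 (fun _ => ({x}ᶜ : Set X))
      (fun _ => isOpen_compl_singleton) hvie
    set lam : ℝ := max 0 (α - δ/2) with hlamdef
    have hlam0 : 0 ≤ lam := le_max_left _ _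
    have hlamα : lam < α := by
      apply max_lt hα.1
      linarith
    have hlam1 : lam ≤ 1 := le_trans (le_of_lt hlamα) hα.2
    have hgt : α - δ < lam := lt_of_lt_of_le (by linarith) (le_max_right _ _)
    have := (hδ' lam ⟨hlam0, hlam1⟩ hgt (le_of_lt hlamα)).1 (hmem lam ⟨hlam0, hlamα⟩)
    rw [Set.mem_iUnion] at this
    obtain ⟨_, h⟩ := this
    exact h rfl
  -- lemma C : cuts at positive levels
  have hC : ∀ α ∈ Set.Ioc (0:ℝ) 1, fuzzyCut w α = u α := by
    intro α hα
    rw [fuzzyCut, if_neg (ne_of_gt hα.1)]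
    ext x
    exact ⟨fun h => hB α hα x h, fun h => hA x α ⟨le_of_lt hα.1, hα.2⟩ h⟩
  -- lemma D : the support set
  have hD : {x | 0 < w x} = ⋃ β ∈ Set.Ioc (0:ℝ) 1, u β := by
    ext x
    simp only [Set.mem_setOf_eq, Set.mem_iUnion]
    constructor
    · intro hx
      have hSne : {β | β ∈ Set.Icc (0:ℝ) 1 ∧ x ∈ u β}.Nonempty := by
        by_contra h
        rw [Set.not_nonempty_iff_eq_empty] at h
        have : w x = 0 := by simp only [hwdef, h, Real.sSup_empty]
        rw [this] at hx
        exact lt_irrefl 0 hx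
      obtain ⟨β, hβ, hβ'⟩ := exists_lt_of_lt_csSup hSne hx
      exact ⟨β, ⟨hβ', hβ.1.2⟩, hβ.2⟩
    · rintro ⟨β, hβ, hx⟩
      exact lt_of_lt_of_le hβ.1 (hA x β ⟨le_of_lt hβ.1, hβ.2⟩ hx)
  -- lemma E : the support
  have hE : closure {x | 0 < w x} = u 0 := by
    apply Set.Subset.antisymm
    · rw [hD]
      exact hclos 0 ⟨le_refl 0, zero_lt_one⟩
    · intro x hx
      by_contra hxc
      set C := closure {x | 0 < w x} with hCdef
      set V : Fin 2 → Set X := fun i => if i = 0 then Set.univ else Cᶜ with hVdef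
      have hVopen : ∀ i, IsOpen (V i) := by
        intro i
        by_cases h : i = 0
        · simp only [hVdef, if_pos h]; exact isOpen_univ
        · simp only [hVdef, if_neg h]; exact isClosed_closure.isOpen_compl
      have hvie : inVietoris (u 0) 2 V := by
        constructor
        · intro y _
          exact Set.mem_iUnion.2 ⟨0, by simp [hVdef]⟩
        · intro i
          by_cases h : i = 0
          · obtain ⟨y, hy⟩ := hne 0 ⟨le_refl 0, zero_le_one⟩
            exact ⟨y, hy, by simp [hVdef, h]⟩
          · exact ⟨x, hx, by simp only [hVdef, if_neg h]; exact hxc⟩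
      obtain ⟨δ, hδ, hδ'⟩ := hright 2 V hVopen hvie
      set lam : ℝ := min (δ/2) 1 with hlamdef
      have hlam0 : 0 < lam := lt_min (by linarith) zero_lt_one
      have hlam1 : lam ≤ 1 := min_le_right _ _
      have hlamδ : lam < δ := lt_of_le_of_lt (min_le_left _ _) (by linarith)
      obtain ⟨y, hy1, hy2⟩ := (hδ' lam ⟨le_of_lt hlam0, hlam1⟩ hlamδ).2 1
      have : y ∈ C := by
        rw [hCdef]
        apply subset_closure
        rw [hD, Set.mem_iUnion]
        exact ⟨lam, Set.mem_iUnion.2 ⟨⟨hlam0, hlam1⟩, hy1⟩⟩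
      simp only [hVdef] at hy2
      norm_num at hy2
      exact hy2 this
  have hC0 : fuzzyCut w 0 = u 0 := by
    rw [fuzzyCut, if_pos rfl]
    exact hE
  -- upper semicontinuity
  have husc : UpperSemicontinuous w := by
    rw [upperSemicontinuous_iff_isOpen_preimage]
    intro y
    have : w ⁻¹' Set.Iio y = {x | y ≤ w x}ᶜ := by
      ext x; simp [not_le]
    rw [this]
    rcases le_or_gt y 0 with hy | hy
    · have : {x : X | y ≤ w x} = Set.univ :=
        Set.eq_univ_of_forall fun x => le_trans hy (hw_nonneg x)
      rw [this]
      exact isClosed_univ.isOpen_compl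
    · rcases le_or_gt y 1 with hy1 | hy1
      · have : {x : X | y ≤ w x} = u y := by
          have := hC y ⟨hy, hy1⟩
          rwa [fuzzyCut, if_neg (ne_of_gt hy)] at this
        rw [this]
        exact ((hcomp y ⟨le_of_lt hy, hy1⟩).isClosed).isOpen_compl
      · have : {x : X | y ≤ w x} = ∅ := by
          ext x
          simp only [Set.mem_setOf_eq, Set.mem_empty_iff_false, iff_false, not_le]
          exact lt_of_le_of_lt (hw_le_one x) hy1
        rw [this]
        exact isClosed_empty.isOpen_compl
  -- the fuzzy set property
  have hwf : IsFuzzySet w := by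
    refine ⟨fun x => ⟨hw_nonneg x, hw_le_one x⟩, husc, ?_, ?_⟩
    · obtain ⟨x, hx⟩ := hne 1 ⟨zero_le_one, le_refl 1⟩
      exact ⟨x, le_antisymm (hw_le_one x) (hA x 1 ⟨zero_le_one, le_refl 1⟩ hx)⟩
    · rw [hE]
      exact hcomp 0 ⟨le_refl 0, zero_le_one⟩
  have hwcut : ∀ α ∈ Set.Icc (0:ℝ) 1, fuzzyCut w α = u α := by
    intro α hα
    rcases eq_or_lt_of_le hα.1 with h | h
    · rw [← h]; exact hC0
    · exact hC α ⟨h, hα.2⟩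
  -- uniqueness helper
  have huniq : ∀ v v' : X → ℝ, (∀ x, v x ∈ Set.Icc (0:ℝ) 1) → (∀ x, 0 ≤ v' x) →
      (∀ α ∈ Set.Icc (0:ℝ) 1, fuzzyCut v α = u α) →
      (∀ α ∈ Set.Icc (0:ℝ) 1, fuzzyCut v' α = u α) → ∀ x, v x ≤ v' x := by
    intro v v' hv hv' hvcut hv'cut x
    rcases le_or_gt (v x) 0 with h | h
    · exact le_trans h (hv' x)
    · set α := v x with hα
      have hα1 : α ≤ 1 := (hv x).2
      have hx : x ∈ fuzzyCut v α := by
        rw [fuzzyCut, if_neg (ne_of_gt h)]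
        exact le_refl α
      rw [hvcut α ⟨le_of_lt h, hα1⟩, ← hv'cut α ⟨le_of_lt h, hα1⟩,
        fuzzyCut, if_neg (ne_of_gt h)] at hx
      exact hx
  refine ⟨w, ⟨hwf, hwcut⟩, ?_⟩
  rintro v ⟨hvf, hvcut⟩
  funext x
  exact le_antisymm (huniq v w hvf.mem_Icc hw_nonneg hvcut hwcut x)
    (huniq w v hwf.mem_Icc (fun y => (hvf.mem_Icc y).1) hwcut hvcut x)
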